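/- arXiv:math/9406218 — 3 statements merged into one kernel-verified Lean document; each statement's English description precedes it below -/
import Mathlib

section
/- Let Γ be an (additively written) abelian group and let P ⊆ Γ be an order on Γ. Then for every finite subset F ⊆ Γ there exists a group homomorphism ψ : Γ → ℝ such that sgn_P(χ) = sgn(ψ(χ)) for all χ ∈ F, where sgn denotes the usual signum function on ℝ. -/
/-- An *order* on an (additively written) abelian group `Γ` is a subset `P ⊆ Γ` with
`P + P ⊆ P`, `P ∩ (−P) = {0}`, and `P ∪ (−P) = Γ`. -/
def IsOrder {Γ : Type*} [AddCommGroup Γ] (P : Set Γ) : Prop :=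
  (∀ a ∈ P, ∀ b ∈ P, a + b ∈ P) ∧
  (P ∩ {x | -x ∈ P} = {0}) ∧
  (P ∪ {x | -x ∈ P} = Set.univ)

/-- The signum function of an order `P`: `sgn_P(χ) = 1` if `χ ∈ P \ {0}`, `sgn_P(0) = 0`,
and `sgn_P(χ) = −1` if `χ ∈ (−P) \ {0}`. -/
noncomputable def sgnOrder {Γ : Type*} [AddCommGroup Γ] (P : Set Γ) (x : Γ) : ℝ := by
  classical exact if x = 0 then 0 else if x ∈ P then 1 else -1

/-! An order turns `Γ` into a linearly ordered group, which by Hahn's embedding theorem sits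
inside the lexicographically ordered Hahn series `Lex ℝ⟦Ω⟧`. A Hahn series is positive iff its
first nonzero coefficient is. Finitely many positive series only involve finitely many leading
indices `ω₁ < ⋯ < ωₖ`; the functional `∑ⱼ tʲ · coeff ωⱼ` is positive on all of them once `t > 0`
is small, because the leading coefficient then dominates the rest. Applied to `|χ|` for the
nonzero `χ ∈ F`, such a functional has the required signs. -/

open Finset Filter Topology
open scoped HahnSeries

section LexWeights

variable {Γ : Type*} [LinearOrder Γ]

def Finset.rank (S : Finset Γ) (ω : Γ) : ℕ := #{ω' ∈ S | ω' < ω}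

theorem Finset.rank_mono (S : Finset Γ) {ω ω' : Γ} (h : ω ≤ ω') : S.rank ω ≤ S.rank ω' :=
  card_le_card <| monotone_filter_right S fun _ _ hlt => hlt.trans_le h

theorem Finset.rank_lt_rank {S : Finset Γ} {ω ω' : Γ} (hω : ω ∈ S) (h : ω < ω') :
    S.rank ω < S.rank ω' :=
  card_lt_card <| (ssubset_iff_of_subset (monotone_filter_right S fun _ _ hlt => hlt.trans h)).2
    ⟨ω, by simp [hω, h]⟩

theorem eventually_pos_sum_pow_rank_mul {S : Finset Γ} {v : Γ → ℝ} {i : Γ} (hi : i ∈ S)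
    (hv0 : ∀ j < i, v j = 0) (hvi : 0 < v i) :
    ∀ᶠ t in 𝓝[>] (0 : ℝ), 0 < ∑ ω ∈ S, t ^ S.rank ω * v ω := by
  let g (t : ℝ) : ℝ := ∑ ω ∈ S, t ^ (S.rank ω - S.rank i) * v ω
  have hfactor (t : ℝ) : ∑ ω ∈ S, t ^ S.rank ω * v ω = t ^ S.rank i * g t := by
    rw [mul_sum]
    refine sum_congr rfl fun ω _ => ?_
    rcases lt_or_ge ω i with h | h
    · rw [hv0 ω h, mul_zero, mul_zero, mul_zero]
    · rw [← mul_assoc, ← pow_add, Nat.add_sub_cancel' (S.rank_mono h)]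
  have hg0 : g 0 = v i := by
    refine (sum_eq_single i (fun ω _ hne => ?_) (absurd hi)).trans (by simp)
    rcases lt_or_gt_of_ne hne with h | h
    · simp [hv0 ω h]
    · rw [zero_pow (Nat.sub_ne_zero_of_lt (rank_lt_rank hi h)), zero_mul]
  have hg : ∀ᶠ t in 𝓝 0, 0 < g t :=
    continuousAt_const.eventually_lt (show Continuous g by fun_prop).continuousAt (hg0 ▸ hvi)
  filter_upwards [self_mem_nhdsWithin, nhdsWithin_le_nhds hg] with t ht hgt
  rw [hfactor]
  exact mul_pos (pow_pos ht _) hgt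

theorem HahnSeries.exists_addMonoidHom_real_pos (s : Finset (Lex ℝ⟦Γ⟧)) (hs : ∀ x ∈ s, 0 < x) :
    ∃ ψ : Lex ℝ⟦Γ⟧ →+ ℝ, ∀ x ∈ s, 0 < ψ x := by
  choose i hi0 hipos using fun x hx => (HahnSeries.lt_iff 0 x).1 (hs x hx)
  let S := s.attach.image fun x : s => i x.1 x.2
  have hev (x) (hx : x ∈ s) :
      ∀ᶠ t in 𝓝[>] (0 : ℝ), 0 < ∑ ω ∈ S, t ^ S.rank ω * (ofLex x).coeff ω :=
    eventually_pos_sum_pow_rank_mul (mem_image.2 ⟨⟨x, hx⟩, mem_attach _ _, rfl⟩)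
      (fun j hj => by simpa using (hi0 x hx j hj).symm) (by simpa using hipos x hx)
  obtain ⟨t, ht⟩ := ((eventually_all_finset s).2 hev).exists
  exact ⟨AddMonoidHom.mk' (fun x => ∑ ω ∈ S, t ^ S.rank ω * (ofLex x).coeff ω)
    fun a b => by simp [mul_add, sum_add_distrib], ht⟩

end LexWeights

theorem exists_addMonoidHom_real_pos {G : Type*} [AddCommGroup G] [LinearOrder G]
    [IsOrderedAddMonoid G] (s : Finset G) (hs : ∀ x ∈ s, 0 < x) :
    ∃ ψ : G →+ ℝ, ∀ x ∈ s, 0 < ψ x := by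
  obtain ⟨f, hf, -⟩ := hahnEmbedding_isOrderedAddMonoid G
  have hfpos (x) (hx : x ∈ s) : 0 < f x := by
    simpa using (OrderHomClass.monotone f).strictMono_of_injective hf (hs x hx)
  obtain ⟨ψ, hψ⟩ := HahnSeries.exists_addMonoidHom_real_pos (s.image f) (by simpa using hfpos)
  exact ⟨ψ.comp f.toAddMonoidHom, fun x hx => hψ _ (mem_image_of_mem f hx)⟩

theorem sgnOrder_eq_sign_of_pos_abs {Γ : Type*} [AddCommGroup Γ] [LinearOrder Γ]
    [IsOrderedAddMonoid Γ] {P : Set Γ} (hP : ∀ x, 0 ≤ x ↔ x ∈ P) (ψ : Γ →+ ℝ) {χ : Γ}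
    (hψ : χ ≠ 0 → 0 < ψ |χ|) : sgnOrder P χ = Real.sign (ψ χ) := by
  rcases lt_trichotomy χ 0 with h | rfl | h
  · have hψχ : ψ χ < 0 := by simpa [abs_of_neg h] using hψ h.ne
    have hχP : χ ∉ P := fun hχ => h.not_ge ((hP χ).2 hχ)
    simp [sgnOrder, h.ne, hχP, Real.sign_of_neg hψχ]
  · simp [sgnOrder]
  · have hψχ : 0 < ψ χ := by simpa [abs_of_pos h] using hψ h.ne'
    simp [sgnOrder, h.ne', (hP χ).1 h.le, Real.sign_of_pos hψχ]

namespace IsOrder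

variable {Γ : Type*} [AddCommGroup Γ] {P : Set Γ}

def toAddGroupCone (hP : IsOrder P) : AddGroupCone Γ where
  carrier := P
  add_mem' ha hb := hP.1 _ ha _ hb
  zero_mem' := by simpa using (Set.eq_univ_iff_forall.1 hP.2.2 0 : (0 : Γ) ∈ P ∪ {x | -x ∈ P})
  eq_zero_of_mem_of_neg_mem' ha hna := by
    simpa [hP.2.1] using (show _ ∈ P ∩ {x | -x ∈ P} from ⟨ha, hna⟩)

theorem hasMemOrNegMem (hP : IsOrder P) : HasMemOrNegMem hP.toAddGroupCone :=
  ⟨fun a => (Set.eq_univ_iff_forall.1 hP.2.2 a : a ∈ P ∪ {x | -x ∈ P})⟩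

end IsOrder

/-- For every order `P` on an abelian group `Γ` and every finite subset `F ⊆ Γ` there is a
group homomorphism `ψ : Γ → ℝ` such that `sgn_P(χ) = sgn(ψ(χ))` for all `χ ∈ F`. -/
theorem order_separation {Γ : Type*} [AddCommGroup Γ] (P : Set Γ) (hP : IsOrder P)
    (F : Finset Γ) :
    ∃ ψ : Γ →+ ℝ, ∀ χ ∈ F, sgnOrder P χ = Real.sign (ψ χ) := by
  classical
  have := hP.hasMemOrNegMem
  let := LinearOrder.mkOfAddGroupCone hP.toAddGroupCone
  have := IsOrderedAddMonoid.mkOfCone hP.toAddGroupCone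
  have hnonneg (x : Γ) : 0 ≤ x ↔ x ∈ P := by
    change x - 0 ∈ P ↔ x ∈ P
    rw [sub_zero]
  obtain ⟨ψ, hψ⟩ := exists_addMonoidHom_real_pos ({χ ∈ F | χ ≠ 0}.image abs)
    (forall_mem_image.2 fun χ hχ => abs_pos.2 (mem_filter.1 hχ).2)
  exact ⟨ψ, fun χ hχ => sgnOrder_eq_sign_of_pos_abs hnonneg ψ fun h0 =>
    hψ _ (mem_image_of_mem _ (mem_filter.2 ⟨hχ, h0⟩))⟩
end

section
/- Let X be a complex Banach space, let G be a compact Hausdorff abelian group with dual group Γ, let P be an order on Γ, and let f = ∑_{χ∈F} a_χ χ be an X-valued trigonometric polynomial (F ⊆ Γ finite, a_χ ∈ X). Suppose ψ : Γ → ℝ is a group homomorphism with sgn(ψ(χ)) = sgn_P(χ) for all χ ∈ F, and φ : ℝ → G is a continuous homomorphism adjoint to ψ, i.e. χ(φ(t)) = e^{iψ(χ)t} for all χ ∈ Γ and t ∈ ℝ. Then for every x ∈ G, the limit as n → ∞ of (1/π) ∫_{1/n ≤ |t| ≤ n} f(x − φ(t))/t dt equals T_P f(x). -/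
open Filter MeasureTheory Complex

/-- `Γ`, via the injection `e`, is the dual group of `G`: every `e χ` is a continuous
character of `G` with values in the unit circle of `ℂ`, `e` is an injective homomorphism,
and every continuous character of `G` is of the form `e χ`. -/
structure IsDualGroup (G : Type*) [AddCommGroup G] [TopologicalSpace G]
    {Γ : Type*} [AddCommGroup Γ] (e : Γ → G → ℂ) : Prop where
  continuous : ∀ χ, Continuous (e χ)
  norm_one : ∀ χ x, ‖e χ x‖ = 1
  char_add : ∀ χ x y, e χ (x + y) = e χ x * e χ y
  map_add : ∀ χ χ' x, e (χ + χ') x = e χ x * e χ' x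
  injective : Function.Injective e
  surjective : ∀ c : G → ℂ, Continuous c → (∀ x, ‖c x‖ = 1) →
    (∀ x y, c (x + y) = c x * c y) → ∃ χ, e χ = c

/-- The truncated domain `{t ∈ ℝ : 1/n ≤ |t| ≤ n}`. -/
def truncSet (n : ℕ) : Set ℝ := {t : ℝ | 1 / (n : ℝ) ≤ |t| ∧ |t| ≤ (n : ℝ)}

/-!
Writing `f(x - φ t) = ∑_χ a_χ χ(x) e^{-iψ(χ)t}` reduces the claim to the scalar limit
`(1/π) ∫_{1/n ≤ |t| ≤ n} e^{-ict}/t dt → -i sgn c` for each frequency `c = ψ(χ)`; the hypothesis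
on `ψ` then turns `sgn ψ(χ)` into `sgn_P χ`. Folding `t ↦ -t` turns the scalar integral into
`-(2i/π) ∫_{1/n}^{n} sin(ct)/t dt = -(2i/π) (Si(cn) - Si(c/n))`, and `Si(b) → ±π/2` as
`b → ±∞` is the Dirichlet integral, which follows from `1/x = ∫_0^∞ e^{-xt} dt` and Fubini.
-/

open Set Topology
open scoped Real

namespace Real

noncomputable def sinIntegral (b : ℝ) : ℝ := ∫ x in 0..b, sinc x

theorem continuous_sinIntegral : Continuous sinIntegral :=
  intervalIntegral.continuous_primitive (fun _ _ => continuous_sinc.intervalIntegrable _ _) 0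

@[simp]
theorem sinIntegral_zero : sinIntegral 0 = 0 := by simp [sinIntegral]

theorem sinIntegral_neg (b : ℝ) : sinIntegral (-b) = -sinIntegral b := by
  have h := intervalIntegral.integral_comp_neg (a := 0) (b := b) sinc
  simp only [sinc_neg, neg_zero] at h
  rw [sinIntegral, sinIntegral, h, intervalIntegral.integral_symm 0 (-b), neg_neg]

theorem integral_mul_sinc_mul (c a b : ℝ) :
    ∫ t in a..b, c * sinc (c * t) = sinIntegral (c * b) - sinIntegral (c * a) := by
  rw [intervalIntegral.integral_const_mul, intervalIntegral.mul_integral_comp_mul_left,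
    sinIntegral, sinIntegral, intervalIntegral.integral_interval_sub_left] <;>
    exact continuous_sinc.intervalIntegrable _ _

theorem integral_exp_neg_mul_Ioi {x : ℝ} (hx : 0 < x) :
    ∫ t in Ioi (0 : ℝ), Real.exp (-x * t) = x⁻¹ := by
  simpa [neg_div, div_neg] using integral_exp_mul_Ioi (neg_lt_zero.2 hx) 0

theorem integral_exp_neg_mul_sin (t b : ℝ) :
    ∫ x in 0..b, Real.exp (-x * t) * Real.sin x
      = (1 - Real.exp (-b * t) * (t * Real.sin b + Real.cos b)) / (1 + t ^ 2) := by
  have hderiv : ∀ x, HasDerivAt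
      (fun x => -(Real.exp (-x * t) * (t * Real.sin x + Real.cos x)) / (1 + t ^ 2))
      (Real.exp (-x * t) * Real.sin x) x := by
    intro x
    have hexp : HasDerivAt (fun x => Real.exp (-x * t)) (Real.exp (-x * t) * (-t)) x := by
      simpa using ((hasDerivAt_neg x).mul_const t).exp
    have htrig : HasDerivAt (fun x => t * Real.sin x + Real.cos x)
        (t * Real.cos x - Real.sin x) x := by
      simpa [sub_eq_add_neg] using ((hasDerivAt_sin x).const_mul t).fun_add (hasDerivAt_cos x)
    refine ((hexp.mul htrig).neg.div_const (1 + t ^ 2)).congr_deriv ?_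
    field_simp
    ring
  have hcont : Continuous fun x => Real.exp (-x * t) * Real.sin x := by fun_prop
  rw [intervalIntegral.integral_eq_sub_of_hasDerivAt (fun x _ => hderiv x)
    (hcont.intervalIntegrable _ _)]
  simp only [neg_zero, zero_mul, Real.exp_zero, Real.sin_zero, Real.cos_zero]
  ring

theorem abs_integral_exp_neg_mul_sin_sub_le {t : ℝ} (ht : 0 ≤ t) (b : ℝ) :
    |(∫ x in 0..b, Real.exp (-x * t) * Real.sin x) - (1 + t ^ 2)⁻¹| ≤ 2 * Real.exp (-b * t) := by
  have hpos : (0 : ℝ) < 1 + t ^ 2 := by positivity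
  have htrig : |t * Real.sin b + Real.cos b| ≤ 2 * (1 + t ^ 2) :=
    calc |t * Real.sin b + Real.cos b| ≤ t * 1 + 1 := by
          refine (abs_add_le _ _).trans (add_le_add ?_ (abs_cos_le_one b))
          rw [abs_mul, abs_of_nonneg ht]
          exact mul_le_mul_of_nonneg_left (abs_sin_le_one b) ht
      _ ≤ 2 * (1 + t ^ 2) := by nlinarith [sq_nonneg (t - 1)]
  rw [integral_exp_neg_mul_sin, inv_eq_one_div, div_sub_div_same, abs_div, abs_of_pos hpos,
    div_le_iff₀ hpos]
  calc |1 - Real.exp (-b * t) * (t * Real.sin b + Real.cos b) - 1|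
      = Real.exp (-b * t) * |t * Real.sin b + Real.cos b| := by
        rw [sub_sub_cancel_left, abs_neg, abs_mul, abs_of_pos (exp_pos _)]
    _ ≤ 2 * Real.exp (-b * t) * (1 + t ^ 2) := by
        nlinarith [mul_le_mul_of_nonneg_left htrig (exp_pos (-b * t)).le]

theorem integrable_exp_neg_mul_mul_sin {b : ℝ} :
    Integrable (fun p : ℝ × ℝ => Real.exp (-p.2 * p.1) * Real.sin p.2)
      ((volume.restrict (Ioi 0)).prod (volume.restrict (Ioc 0 b))) := by
  refine (integrable_prod_iff' (by fun_prop : Continuous fun p : ℝ × ℝ =>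
    Real.exp (-p.2 * p.1) * Real.sin p.2).aestronglyMeasurable).2 ⟨?_, ?_⟩
  · filter_upwards [ae_restrict_mem measurableSet_Ioc] with x hx
    exact (exp_neg_integrableOn_Ioi 0 hx.1).mul_const _
  · refine (continuous_sinc.abs.integrableOn_Ioc).congr ?_
    filter_upwards [ae_restrict_mem measurableSet_Ioc] with x hx
    simp only [norm_mul, Real.norm_of_nonneg (exp_pos _).le, integral_mul_const,
      integral_exp_neg_mul_Ioi hx.1, sinc_of_ne_zero hx.1.ne', abs_div, abs_of_pos hx.1,
      Real.norm_eq_abs, inv_mul_eq_div]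

theorem sinIntegral_eq_integral_Ioi {b : ℝ} (hb : 0 ≤ b) :
    sinIntegral b = ∫ t in Ioi 0, ∫ x in 0..b, Real.exp (-x * t) * Real.sin x := by
  simp_rw [sinIntegral, intervalIntegral.integral_of_le hb]
  rw [integral_integral_swap integrable_exp_neg_mul_mul_sin]
  refine setIntegral_congr_fun measurableSet_Ioc fun x hx => ?_
  rw [integral_mul_const, integral_exp_neg_mul_Ioi hx.1, sinc_of_ne_zero hx.1.ne', inv_mul_eq_div]

theorem abs_sinIntegral_sub_pi_div_two_le {b : ℝ} (hb : 0 < b) :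
    |sinIntegral b - π / 2| ≤ 2 / b := by
  have hL : Integrable (fun t => ∫ x in 0..b, Real.exp (-x * t) * Real.sin x)
      (volume.restrict (Ioi 0)) := by
    simp only [intervalIntegral.integral_of_le hb.le]
    exact integrable_exp_neg_mul_mul_sin.integral_prod_left
  have hpi : π / 2 = ∫ t in Ioi 0, (1 + t ^ 2)⁻¹ := by
    rw [integral_Ioi_inv_one_add_sq, arctan_zero, sub_zero]
  rw [sinIntegral_eq_integral_Ioi hb.le, hpi,
    ← integral_sub hL integrable_inv_one_add_sq.integrableOn, ← Real.norm_eq_abs]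
  calc _ ≤ ∫ t in Ioi 0, 2 * Real.exp (-b * t) :=
        norm_integral_le_of_norm_le ((exp_neg_integrableOn_Ioi 0 hb).const_mul 2) <| by
          filter_upwards [ae_restrict_mem measurableSet_Ioi] with t ht
          exact abs_integral_exp_neg_mul_sin_sub_le (le_of_lt ht) b
    _ = 2 / b := by rw [integral_const_mul, integral_exp_neg_mul_Ioi hb, div_eq_mul_inv]

theorem tendsto_sinIntegral_atTop : Tendsto sinIntegral atTop (𝓝 (π / 2)) := by
  refine tendsto_sub_nhds_zero_iff.1 <| squeeze_zero_norm' ?_ <|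
    (tendsto_const_nhds (x := (2 : ℝ))).div_atTop tendsto_id
  filter_upwards [eventually_gt_atTop 0] with b hb
  exact abs_sinIntegral_sub_pi_div_two_le hb

theorem tendsto_sinIntegral_atBot : Tendsto sinIntegral atBot (𝓝 (-(π / 2))) := by
  simpa [Function.comp_def, sinIntegral_neg] using
    (tendsto_sinIntegral_atTop.comp tendsto_neg_atBot_atTop).neg

theorem tendsto_sinIntegral_mul_natCast (c : ℝ) :
    Tendsto (fun n : ℕ => sinIntegral (c * n)) atTop (𝓝 (sign c * (π / 2))) := by
  rcases lt_trichotomy c 0 with hc | rfl | hc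
  · simpa [sign_of_neg hc, Function.comp_def] using
      tendsto_sinIntegral_atBot.comp (tendsto_natCast_atTop_atTop.const_mul_atTop_of_neg hc)
  · simp
  · simpa [sign_of_pos hc, Function.comp_def] using
      tendsto_sinIntegral_atTop.comp (tendsto_natCast_atTop_atTop.const_mul_atTop hc)

theorem mul_sinc_mul (c : ℝ) {t : ℝ} (ht : t ≠ 0) :
    c * Real.sinc (c * t) = Real.sin (c * t) / t := by
  rcases eq_or_ne c 0 with rfl | hc
  · simp
  · rw [sinc_of_ne_zero (mul_ne_zero hc ht)]
    field_simp

end Real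

theorem Complex.exp_neg_mul_I_sub_exp_mul_I (z : ℂ) :
    Complex.exp (-(z * Complex.I)) - Complex.exp (z * Complex.I)
      = -2 * Complex.I * Complex.sin z := by
  rw [Complex.sin]
  ring_nf
  rw [Complex.I_sq]
  ring

theorem isCompact_truncSet (n : ℕ) : IsCompact (truncSet n) :=
  Metric.isCompact_of_isClosed_isBounded (isClosed_Icc.preimage continuous_abs)
    (Metric.isBounded_Icc (-(n : ℝ)) n |>.subset fun _ ht => abs_le.1 ht.2)

theorem truncSet_subset_compl_zero {n : ℕ} (hn : 0 < n) : truncSet n ⊆ {0}ᶜ := by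
  rintro t ⟨ht, -⟩ (rfl : t = 0)
  rw [abs_zero] at ht
  exact (one_div_pos.2 (Nat.cast_pos.2 hn)).not_ge ht

theorem truncSet_eq_union (n : ℕ) :
    truncSet n = Icc (-(n : ℝ)) (-(1 / n)) ∪ Icc (1 / n : ℝ) n := by
  have hpos : (0 : ℝ) ≤ 1 / n := by positivity
  ext t
  simp only [truncSet, mem_ofPred_eq, mem_union, mem_Icc, le_abs, abs_le]
  constructor
  · rintro ⟨h | h, h', h''⟩ <;> [right; left] <;> constructor <;> linarith
  · rintro (⟨h, h'⟩ | ⟨h, h'⟩) <;>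
      refine ⟨by first | (left; linarith) | (right; linarith), ?_, ?_⟩ <;> linarith

theorem integral_truncSet {E : Type*} [NormedAddCommGroup E] [NormedSpace ℝ E] {f : ℝ → E}
    {n : ℕ} (hn : 0 < n) (hf : IntegrableOn f (truncSet n)) :
    ∫ t in truncSet n, f t = ∫ t in (1 / n : ℝ)..n, (f t + f (-t)) := by
  have hpos : (0 : ℝ) < 1 / n := by positivity
  have hle : (1 / n : ℝ) ≤ n := by
    rw [div_le_iff₀ (by positivity)]; norm_cast; nlinarith
  have hdisj : Disjoint (Icc (-(n : ℝ)) (-(1 / n))) (Icc (1 / n : ℝ) n) :=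
    disjoint_left.2 fun t h h' => by linarith [h.2, h'.1]
  rw [truncSet_eq_union] at hf ⊢
  rw [setIntegral_union hdisj measurableSet_Icc (hf.mono_set subset_union_left)
      (hf.mono_set subset_union_right), integral_Icc_eq_integral_Ioc,
    integral_Icc_eq_integral_Ioc, ← intervalIntegral.integral_of_le (by linarith),
    ← intervalIntegral.integral_of_le hle, add_comm, intervalIntegral.integral_add,
    intervalIntegral.integral_comp_neg]
  · exact (intervalIntegrable_iff_integrableOn_Icc_of_le hle).2 (hf.mono_set subset_union_right)
  · have hneg : IntervalIntegrable f volume (-n) (-(1 / n)) :=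
      (intervalIntegrable_iff_integrableOn_Icc_of_le (by linarith)).2
        (hf.mono_set subset_union_left)
    simpa using ((IntervalIntegrable.iff_comp_neg (by simp)).1 hneg).symm

theorem ContinuousOn.integrableOn_truncSet {E : Type*} [NormedAddCommGroup E] {f : ℝ → E}
    (hf : ContinuousOn f {0}ᶜ) {n : ℕ} (hn : 0 < n) : IntegrableOn f (truncSet n) :=
  (hf.mono (truncSet_subset_compl_zero hn)).integrableOn_compact (isCompact_truncSet n)

noncomputable def hilbertKernelExp (c t : ℝ) : ℂ :=
  (1 / (π * t)) • Complex.exp (-(Complex.I * c * t))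

theorem integrableOn_truncSet_hilbertKernelExp (c : ℝ) {n : ℕ} (hn : 0 < n) :
    IntegrableOn (hilbertKernelExp c) (truncSet n) :=
  ContinuousOn.integrableOn_truncSet
    (by unfold hilbertKernelExp; fun_prop (disch := simp_all [Real.pi_ne_zero])) hn

theorem hilbertKernelExp_add_neg (c : ℝ) {t : ℝ} (ht : t ≠ 0) :
    hilbertKernelExp c t + hilbertKernelExp c (-t)
      = ((-(2 / π) * (c * Real.sinc (c * t)) : ℝ) : ℂ) * Complex.I := by
  have h := Complex.exp_neg_mul_I_sub_exp_mul_I (c * t)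
  rw [hilbertKernelExp, hilbertKernelExp, Real.mul_sinc_mul c ht]
  simp only [Complex.real_smul]
  push_cast
  rw [show -(Complex.I * c * t) = -(c * t * Complex.I) by ring,
    show -(Complex.I * c * -t) = c * t * Complex.I by ring]
  linear_combination (1 / (π * t) : ℂ) * h

theorem tendsto_integral_truncSet_hilbertKernelExp (c : ℝ) :
    Tendsto (fun n : ℕ => ∫ t in truncSet n, hilbertKernelExp c t)
      atTop (𝓝 (-Complex.I * Real.sign c)) := by
  have hint : ∀ᶠ n : ℕ in atTop, ∫ t in truncSet n, hilbertKernelExp c t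
      = ((-(2 / π) * (Real.sinIntegral (c * n) - Real.sinIntegral (c * (1 / n))) : ℝ) : ℂ)
        * Complex.I := by
    filter_upwards [eventually_gt_atTop 0] with n hn
    have hpos : (0 : ℝ) < 1 / n := by positivity
    rw [integral_truncSet hn (integrableOn_truncSet_hilbertKernelExp c hn),
      intervalIntegral.integral_congr (g := fun t => ((-(2 / π) * (c * Real.sinc (c * t)) : ℝ) : ℂ)
        * Complex.I) fun t ht => hilbertKernelExp_add_neg c ?_,
      intervalIntegral.integral_mul_const, intervalIntegral.integral_ofReal,
      intervalIntegral.integral_const_mul, Real.integral_mul_sinc_mul]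
    exact (lt_of_lt_of_le (lt_min hpos (Nat.cast_pos.2 hn)) ht.1).ne'
  have hlim : Tendsto (fun n : ℕ => Real.sinIntegral (c * n) - Real.sinIntegral (c * (1 / n)))
      atTop (𝓝 (Real.sign c * (π / 2))) := by
    have hc : Tendsto (fun n : ℕ => c * (1 / n)) atTop (𝓝 0) := by
      simpa using tendsto_one_div_atTop_nhds_zero_nat.const_mul c
    have h0 := (Real.continuous_sinIntegral.tendsto 0).comp hc
    rw [Real.sinIntegral_zero] at h0
    simpa using (Real.tendsto_sinIntegral_mul_natCast c).sub h0
  refine ((((Complex.continuous_ofReal.tendsto _).comp (hlim.const_mul (-(2 / π)))).mul_const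
    Complex.I).congr' (hint.mono fun n hn => hn.symm)).trans_eq ?_
  congr 1
  push_cast
  field_simp

theorem IsDualGroup.apply_sub_of_eq_exp {G : Type*} [AddCommGroup G] [TopologicalSpace G]
    {Γ : Type*} [AddCommGroup Γ] {e : Γ → G → ℂ} (hdual : IsDualGroup G e) {χ : Γ} {y : G}
    {z : ℂ} (h : e χ y = Complex.exp z) (x : G) : e χ (x - y) = e χ x * Complex.exp (-z) := by
  have hx := hdual.char_add χ (x - y) y
  rw [sub_add_cancel, h] at hx
  rw [hx, mul_assoc, ← Complex.exp_add, add_neg_cancel, Complex.exp_zero, mul_one]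

theorem tendsto_truncated_transfer_eq_conjugate_general
    {X : Type*} [NormedAddCommGroup X] [NormedSpace ℂ X] [CompleteSpace X]
    {G : Type*} [AddCommGroup G] [TopologicalSpace G]
    {Γ : Type*} [AddCommGroup Γ] (e : Γ → G → ℂ) (hdual : IsDualGroup G e)
    (P : Set Γ)
    (F : Finset Γ) (a : Γ → X)
    (ψ : Γ →+ ℝ) (hψ : ∀ χ ∈ F, Real.sign (ψ χ) = sgnOrder P χ)
    (φ : ℝ →+ G)
    (hadj : ∀ (χ : Γ) (t : ℝ), e χ (φ t) = Complex.exp (Complex.I * (ψ χ) * t))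
    (x : G) :
    Tendsto
      (fun n : ℕ =>
        ∫ t in truncSet n, (1 / (Real.pi * t)) • (∑ χ ∈ F, e χ (x - φ t) • a χ))
      atTop
      (nhds (∑ χ ∈ F, (-Complex.I * (sgnOrder P χ : ℂ) * e χ x) • a χ)) := by
  have hintegrand : ∀ t : ℝ, (1 / (π * t)) • ∑ χ ∈ F, e χ (x - φ t) • a χ
      = ∑ χ ∈ F, (e χ x * hilbertKernelExp (ψ χ) t) • a χ := by
    intro t
    rw [Finset.smul_sum]
    refine Finset.sum_congr rfl fun χ _ => ?_
    rw [hdual.apply_sub_of_eq_exp (hadj χ t), hilbertKernelExp, mul_smul_comm, smul_assoc]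
  have hintegral : ∀ᶠ n : ℕ in atTop,
      ∑ χ ∈ F, (e χ x * ∫ t in truncSet n, hilbertKernelExp (ψ χ) t) • a χ
        = ∫ t in truncSet n, (1 / (π * t)) • ∑ χ ∈ F, e χ (x - φ t) • a χ := by
    filter_upwards [eventually_gt_atTop 0] with n hn
    simp only [hintegrand]
    rw [integral_finsetSum _ fun χ _ =>
      ((integrableOn_truncSet_hilbertKernelExp (ψ χ) hn).const_mul _).smul_const _]
    simp only [integral_smul_const, integral_const_mul]
  refine (tendsto_finsetSum F fun χ hχ => ?_).congr' hintegral
  simpa [hψ χ hχ, mul_comm] using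
    ((tendsto_integral_truncSet_hilbertKernelExp (ψ χ)).const_mul (e χ x)).smul_const (a χ)

/-- Let `X` be a complex Banach space, `G` a compact Hausdorff abelian group with dual group
`Γ`, `P` an order on `Γ`, and `f = ∑_{χ∈F} a_χ χ` an `X`-valued trigonometric polynomial.
If `ψ : Γ → ℝ` is a homomorphism with `sgn(ψ(χ)) = sgn_P(χ)` on `F`, and `φ : ℝ → G` is a
continuous homomorphism adjoint to `ψ` (i.e. `χ(φ(t)) = e^{iψ(χ)t}`), then for every `x ∈ G`,
`(1/π) ∫_{1/n ≤ |t| ≤ n} f(x − φ(t))/t dt → T_P f(x)` as `n → ∞`, where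
`T_P f = −i ∑_{χ∈F} sgn_P(χ) a_χ χ`. -/
theorem tendsto_truncated_transfer_eq_conjugate
    {X : Type*} [NormedAddCommGroup X] [NormedSpace ℂ X] [CompleteSpace X]
    {G : Type*} [AddCommGroup G] [TopologicalSpace G] [IsTopologicalAddGroup G]
    [CompactSpace G] [T2Space G]
    {Γ : Type*} [AddCommGroup Γ] (e : Γ → G → ℂ) (hdual : IsDualGroup G e)
    (P : Set Γ) (hP : IsOrder P)
    (F : Finset Γ) (a : Γ → X)
    (ψ : Γ →+ ℝ) (hψ : ∀ χ ∈ F, Real.sign (ψ χ) = sgnOrder P χ)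
    (φ : ℝ →+ G) (hφ_cont : Continuous φ)
    (hadj : ∀ (χ : Γ) (t : ℝ), e χ (φ t) = Complex.exp (Complex.I * (ψ χ) * t))
    (x : G) :
    Tendsto
      (fun n : ℕ =>
        ∫ t in truncSet n, (1 / (Real.pi * t)) • (∑ χ ∈ F, e χ (x - φ t) • a χ))
      atTop
      (nhds (∑ χ ∈ F, (-Complex.I * (sgnOrder P χ : ℂ) * e χ x) • a χ)) :=
  tendsto_truncated_transfer_eq_conjugate_general e hdual P F a ψ hψ φ hadj x
end

section
/- Let X be a complex Banach space, 1 < p < ∞, and suppose there is a constant N such that ‖H_n g‖_{L^p(ℝ,X)} ≤ N ‖g‖_{L^p(ℝ,X)} for all n ∈ ℕ and all g ∈ L^p(ℝ,X), where H_n is the truncated Hilbert transform. Let G be a compact Hausdorff abelian group with normalized Haar measure and let φ : ℝ → G be a continuous group homomorphism. Then for every n ∈ ℕ and every X-valued trigonometric polynomial f on G, the function x ↦ (1/π) ∫_{1/n ≤ |t| ≤ n} f(x − φ(t))/t dt satisfies ‖x ↦ (1/π) ∫_{1/n ≤ |t| ≤ n} f(x − φ(t))/t dt‖_{L^p(G,X)}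 ≤ N ‖f‖_{L^p(G,X)}. -/
open Filter MeasureTheory Complex
open scoped ENNReal

/-- The truncated Hilbert transform `H_n g (t) = (1/π) ∫_{1/n ≤ |s| ≤ n} g(t−s)/s ds`
of an `X`-valued function `g` on `ℝ` (Bochner integral). -/
noncomputable def truncHilbert {X : Type*} [NormedAddCommGroup X] [NormedSpace ℂ X]
    (n : ℕ) (g : ℝ → X) (t : ℝ) : X :=
  ∫ s in truncSet n, (1 / (Real.pi * s)) • g (t - s)

/-!
Transference (Coifman–Weiss). Write `T f x = (1/π) ∫_{truncSet n} f (x - φ t) / t dt`.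
Since `truncSet n ⊆ [-n, n]`, for fixed `x` the function `s ↦ T f (x + φ s)` on `[0, m]` is the
truncated Hilbert transform of `u ↦ f (x + φ u)` cut off to `[-n, m + n]`, so its
`L^p[0, m]`-norm is at most `N` times the `L^p[-n, m + n]`-norm of `u ↦ f (x + φ u)`.
Integrating the `p`-th powers over `x` and using the translation invariance of Haar measure
gives `m ‖T f‖ₚᵖ ≤ Nᵖ (m + 2n) ‖f‖ₚᵖ`, and `m → ∞` yields `‖T f‖ₚ ≤ N ‖f‖ₚ`.
-/

open Set Topology BoundedContinuousFunction

lemma measurableSet_truncSet (n : ℕ) : MeasurableSet (truncSet n) :=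
  measurableSet_Icc.preimage (f := fun t : ℝ => |t|) measurable_abs

lemma truncSet_subset_Icc (n : ℕ) : truncSet n ⊆ Icc (-(n : ℝ)) n :=
  fun _ ht => abs_le.mp ht.2

lemma volume_truncSet_ne_top (n : ℕ) : volume (truncSet n) ≠ ⊤ :=
  ((measure_mono (truncSet_subset_Icc n)).trans_lt measure_Icc_lt_top).ne

lemma abs_one_div_pi_mul_le_of_mem_truncSet {n : ℕ} {t : ℝ} (ht : t ∈ truncSet n) :
    |1 / (Real.pi * t)| ≤ n / Real.pi := by
  obtain ⟨h1, h2⟩ := ht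
  rcases eq_or_ne t 0 with rfl | h0
  · simp only [mul_zero, div_zero, abs_zero]
    positivity
  have hn : 0 < (n : ℝ) := (abs_pos.mpr h0).trans_le h2
  rw [abs_div, abs_one, abs_mul, abs_of_pos Real.pi_pos,
    div_le_div_iff₀ (by positivity) Real.pi_pos]
  nlinarith [(div_le_iff₀ hn).mp h1, Real.pi_pos]

lemma ENNReal.le_of_forall_natCast_mul_le (a b : ℝ≥0∞) (k : ℕ)
    (h : ∀ m : ℕ, (m : ℝ≥0∞) * a ≤ (m + k) * b) : a ≤ b := by
  have hk : Tendsto (fun m : ℕ => (k : ℝ≥0∞) * (m : ℝ≥0∞)⁻¹) atTop (𝓝 0) := by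
    simpa using ENNReal.Tendsto.const_mul ENNReal.tendsto_inv_nat_nhds_zero
      (Or.inr (ENNReal.natCast_ne_top k))
  have hlim : Tendsto (fun m : ℕ => (1 + k * (m : ℝ≥0∞)⁻¹) * b) atTop (𝓝 b) := by
    simpa using ENNReal.Tendsto.mul_const (b := b)
      (tendsto_const_nhds (x := (1 : ℝ≥0∞)).add hk) (Or.inl (by simp))
  refine ge_of_tendsto hlim (eventually_atTop.2 ⟨1, fun m hm => ?_⟩)
  have hm0 : (m : ℝ≥0∞) ≠ 0 := by exact_mod_cast Nat.one_le_iff_ne_zero.mp hm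
  have hm : (m : ℝ≥0∞)⁻¹ * m = 1 := ENNReal.inv_mul_cancel hm0 (ENNReal.natCast_ne_top m)
  calc a = (m : ℝ≥0∞)⁻¹ * (m * a) := by rw [← mul_assoc, hm, one_mul]
    _ ≤ (m : ℝ≥0∞)⁻¹ * ((m + k) * b) := mul_le_mul_of_nonneg_left (h m) zero_le
    _ = (1 + k * (m : ℝ≥0∞)⁻¹) * b := by rw [← mul_assoc, mul_add, hm, mul_comm _ (k : ℝ≥0∞)]

lemma eLpNorm_rpow_toReal_eq_lintegral {α ε : Type*} [MeasurableSpace α] [ENorm ε]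
    {μ : Measure α} {p : ℝ≥0∞} (hp0 : p ≠ 0) (hp : p ≠ ⊤) (f : α → ε) :
    eLpNorm f p μ ^ p.toReal = ∫⁻ x, ‖f x‖ₑ ^ p.toReal ∂μ := by
  lift p to NNReal using hp
  exact eLpNorm_nnreal_pow_eq_lintegral (by exact_mod_cast hp0)

lemma lintegral_lintegral_add_eq {G α : Type*} [AddGroup G] [MeasurableSpace G]
    [MeasurableAdd G] (μ : Measure G) [μ.IsAddRightInvariant] [SFinite μ] [MeasurableSpace α]
    (ν : Measure α) [SFinite ν] (ψ : α → G) {F : G → ℝ≥0∞}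
    (hF : Measurable fun z : G × α => F (z.1 + ψ z.2)) :
    ∫⁻ x, ∫⁻ s, F (x + ψ s) ∂ν ∂μ = ν univ * ∫⁻ x, F x ∂μ := by
  rw [lintegral_lintegral_swap hF.aemeasurable]
  simp only [lintegral_add_right_eq_self, lintegral_const, mul_comm]

section Transference

variable {X : Type*} [NormedAddCommGroup X] [NormedSpace ℂ X] {G : Type*} [AddGroup G]

noncomputable def transferredTruncHilbert (φ : ℝ →+ G) (n : ℕ) (f : G → X) (x : G) : X :=
  ∫ t in truncSet n, (1 / (Real.pi * t)) • f (x - φ t)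

lemma integrableOn_truncSet_smul {n : ℕ} {g : ℝ → X} (hg : AEStronglyMeasurable g)
    {M : ℝ} (hM : ∀ t, ‖g t‖ ≤ M) :
    IntegrableOn (fun t => (1 / (Real.pi * t)) • g t) (truncSet n) := by
  refine Measure.integrableOn_of_bounded (M := n / Real.pi * M) (volume_truncSet_ne_top n)
    ((measurable_const.div (measurable_const.mul measurable_id)).aestronglyMeasurable.smul hg)
    ((ae_restrict_iff' (measurableSet_truncSet n)).2 (ae_of_all _ fun t ht => ?_))
  rw [norm_smul, Real.norm_eq_abs]
  exact mul_le_mul (abs_one_div_pi_mul_le_of_mem_truncSet ht) (hM t) (norm_nonneg _) (by positivity)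

/- `G` need not be first countable, so dominated convergence is not available; instead the
tube lemma makes `f (y - φ t)` close to `f (x₀ - φ t)` uniformly in `t ∈ [-n, n]`. -/
lemma continuous_transferredTruncHilbert [TopologicalSpace G] [IsTopologicalAddGroup G]
    {φ : ℝ →+ G} (hφ : Continuous φ) (n : ℕ) (f : G →ᵇ X) :
    Continuous (transferredTruncHilbert φ n f) := by
  refine continuous_iff_continuousAt.2 fun x₀ => Metric.tendsto_nhds.2 fun ε hε => ?_
  obtain ⟨δ, hδ, hδε⟩ := exists_pos_mul_lt hε (n / Real.pi * volume.real (truncSet n))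
  have hint (y : G) := integrableOn_truncSet_smul (n := n) (g := fun t => f (y - φ t))
    (f.continuous.comp (continuous_const.sub hφ)).aestronglyMeasurable
    fun t => f.norm_coe_le_norm (y - φ t)
  have hnear : ∀ᶠ y in 𝓝 x₀, ∀ t ∈ Icc (-(n : ℝ)) n, dist (f (y - φ t)) (f (x₀ - φ t)) < δ :=
    isCompact_Icc.eventually_forall_of_forall_eventually fun t _ =>
      (((f.continuous.comp (continuous_fst.sub (hφ.comp continuous_snd))).dist
        (f.continuous.comp (continuous_const.sub (hφ.comp continuous_snd)))).tendsto
          (x₀, t)).eventually_lt_const (by simpa using hδ)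
  filter_upwards [hnear] with y hy
  rw [dist_eq_norm, transferredTruncHilbert, transferredTruncHilbert,
    ← integral_sub (hint y) (hint x₀)]
  refine (norm_setIntegral_le_of_norm_le_const (C := n / Real.pi * δ)
    (volume_truncSet_ne_top n).lt_top fun t ht => ?_).trans_lt (by rwa [mul_right_comm])
  rw [← smul_sub, norm_smul, Real.norm_eq_abs, ← dist_eq_norm]
  exact mul_le_mul (abs_one_div_pi_mul_le_of_mem_truncSet ht)
    (hy t (truncSet_subset_Icc n ht)).le dist_nonneg (by positivity)

lemma transferredTruncHilbert_add_map {φ : ℝ →+ G} {n : ℕ} {m s : ℝ} (hs : s ∈ Icc 0 m)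
    (f : G → X) (x : G) :
    transferredTruncHilbert φ n f (x + φ s) =
      truncHilbert n ((Icc (-(n : ℝ)) (m + n)).indicator fun u => f (x + φ u)) s := by
  refine setIntegral_congr_fun (measurableSet_truncSet n) fun t ht => ?_
  have ht' := truncSet_subset_Icc n ht
  have hst : s - t ∈ Icc (-(n : ℝ)) (m + n) :=
    ⟨by linarith [hs.1, ht'.2], by linarith [hs.2, ht'.1]⟩
  simp only [indicator_of_mem hst, map_sub, add_sub_assoc]

lemma eLpNorm_transferredTruncHilbert_add_map_le [TopologicalSpace G] [IsTopologicalAddGroup G]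
    {p C : ℝ≥0∞} {n : ℕ}
    (hH : ∀ g : ℝ → X, MemLp g p volume →
      eLpNorm (truncHilbert n g) p volume ≤ C * eLpNorm g p volume)
    {φ : ℝ →+ G} (hφ : Continuous φ) (f : G →ᵇ X) (x : G) (m : ℝ) :
    eLpNorm (fun s => transferredTruncHilbert φ n f (x + φ s)) p (volume.restrict (Icc 0 m)) ≤
      C * eLpNorm (fun u => f (x + φ u)) p (volume.restrict (Icc (-(n : ℝ)) (m + n))) := by
  set h := (Icc (-(n : ℝ)) (m + n)).indicator fun u => f (x + φ u)
  have hfx : Continuous fun u => f (x + φ u) := f.continuous.comp (continuous_const.add hφ)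
  have hh : MemLp h p volume := (memLp_indicator_iff_restrict measurableSet_Icc).2
    (MemLp.of_bound hfx.aestronglyMeasurable ‖f‖ (ae_of_all _ fun u => f.norm_coe_le_norm _))
  calc eLpNorm (fun s => transferredTruncHilbert φ n f (x + φ s)) p (volume.restrict (Icc 0 m))
      = eLpNorm (truncHilbert n h) p (volume.restrict (Icc 0 m)) :=
        eLpNorm_congr_ae <| (ae_restrict_iff' measurableSet_Icc).2 <|
          ae_of_all _ fun s hs => transferredTruncHilbert_add_map hs f x
    _ ≤ eLpNorm (truncHilbert n h) p volume := eLpNorm_mono_measure _ Measure.restrict_le_self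
    _ ≤ C * eLpNorm h p volume := hH h hh
    _ = _ := by rw [eLpNorm_indicator_eq_eLpNorm_restrict measurableSet_Icc]

theorem eLpNorm_transferredTruncHilbert_le [TopologicalSpace G] [IsTopologicalAddGroup G]
    [MeasurableSpace G] [BorelSpace G] {p C : ℝ≥0∞} (hp : p ≠ ⊤) {n : ℕ}
    (hH : ∀ g : ℝ → X, MemLp g p volume →
      eLpNorm (truncHilbert n g) p volume ≤ C * eLpNorm g p volume)
    (μ : Measure G) [μ.IsAddRightInvariant] [SFinite μ]
    {φ : ℝ →+ G} (hφ : Continuous φ) (f : G →ᵇ X) :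
    eLpNorm (transferredTruncHilbert φ n f) p μ ≤ C * eLpNorm f p μ := by
  rcases eq_or_ne p 0 with rfl | hp0
  · simp
  set T := transferredTruncHilbert φ n f
  have hq : 0 < p.toReal := ENNReal.toReal_pos hp0 hp
  have hmeas : ∀ F : G → ℝ≥0∞, Continuous F → Measurable fun z : G × ℝ => F (z.1 + φ z.2) :=
    fun F hF => (hF.comp (continuous_fst.add (hφ.comp continuous_snd))).measurable
  have hT : Continuous fun x => ‖T x‖ₑ ^ p.toReal :=
    ENNReal.continuous_rpow_const.comp (continuous_transferredTruncHilbert hφ n f).enorm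
  have hf : Continuous fun x => ‖f x‖ₑ ^ p.toReal :=
    ENNReal.continuous_rpow_const.comp f.continuous.enorm
  rw [← ENNReal.rpow_le_rpow_iff hq, ENNReal.mul_rpow_of_nonneg _ _ hq.le,
    eLpNorm_rpow_toReal_eq_lintegral hp0 hp, eLpNorm_rpow_toReal_eq_lintegral hp0 hp]
  refine ENNReal.le_of_forall_natCast_mul_le _ _ (2 * n) fun m => ?_
  have hloc (x : G) : ∫⁻ s in Icc 0 (m : ℝ), ‖T (x + φ s)‖ₑ ^ p.toReal ≤
      C ^ p.toReal * ∫⁻ u in Icc (-(n : ℝ)) (m + n), ‖f (x + φ u)‖ₑ ^ p.toReal := by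
    rw [← eLpNorm_rpow_toReal_eq_lintegral hp0 hp, ← eLpNorm_rpow_toReal_eq_lintegral hp0 hp,
      ← ENNReal.mul_rpow_of_nonneg _ _ hq.le]
    exact ENNReal.rpow_le_rpow (eLpNorm_transferredTruncHilbert_add_map_le hH hφ f x m) hq.le
  calc (m : ℝ≥0∞) * ∫⁻ x, ‖T x‖ₑ ^ p.toReal ∂μ
      = ∫⁻ x, (∫⁻ s in Icc 0 (m : ℝ), ‖T (x + φ s)‖ₑ ^ p.toReal) ∂μ := by
        rw [lintegral_lintegral_add_eq μ _ φ (F := fun x => ‖T x‖ₑ ^ p.toReal) (hmeas _ hT)]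
        simp [Real.volume_Icc]
    _ ≤ ∫⁻ x, C ^ p.toReal * (∫⁻ u in Icc (-(n : ℝ)) (m + n), ‖f (x + φ u)‖ₑ ^ p.toReal) ∂μ :=
        lintegral_mono hloc
    _ = C ^ p.toReal * ∫⁻ x, (∫⁻ u in Icc (-(n : ℝ)) (m + n), ‖f (x + φ u)‖ₑ ^ p.toReal) ∂μ :=
        lintegral_const_mul _ (hmeas _ hf).lintegral_prod_right'
    _ = (m + (2 * n : ℕ)) * (C ^ p.toReal * ∫⁻ x, ‖f x‖ₑ ^ p.toReal ∂μ) := by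
        rw [lintegral_lintegral_add_eq μ _ φ (F := fun x => ‖f x‖ₑ ^ p.toReal) (hmeas _ hf),
          Measure.restrict_apply_univ, Real.volume_Icc,
          show (m : ℝ) + n - -n = (m + 2 * n : ℕ) by push_cast; ring, ENNReal.ofReal_natCast,
          Nat.cast_add]
        ring

end Transference

theorem transference_truncated_hilbert_general
    {X : Type*} [NormedAddCommGroup X] [NormedSpace ℂ X]
    (p : ℝ≥0∞) (hp_top : p ≠ ⊤) (N : ℝ)
    (hHT : ∀ (n : ℕ) (g : ℝ → X), MemLp g p (volume : Measure ℝ) →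
      eLpNorm (truncHilbert n g) p (volume : Measure ℝ) ≤
        ENNReal.ofReal N * eLpNorm g p (volume : Measure ℝ))
    {G : Type*} [AddCommGroup G] [TopologicalSpace G] [IsTopologicalAddGroup G]
    [CompactSpace G] [MeasurableSpace G] [BorelSpace G]
    (μ : Measure G) [μ.IsAddHaarMeasure]
    (φ : ℝ →+ G) (hφ_cont : Continuous φ)
    (F : Finset (G → ℂ))
    (hF : ∀ c ∈ F, Continuous c ∧ (∀ x, ‖c x‖ = 1) ∧ ∀ x y, c (x + y) = c x * c y)
    (a : (G → ℂ) → X) (n : ℕ) :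
    eLpNorm
      (fun x : G => ∫ t in truncSet n, (1 / (Real.pi * t)) • (∑ c ∈ F, c (x - φ t) • a c))
      p μ ≤
    ENNReal.ofReal N * eLpNorm (fun x : G => ∑ c ∈ F, c x • a c) p μ :=
  eLpNorm_transferredTruncHilbert_le hp_top (hHT n) μ hφ_cont <|
    BoundedContinuousFunction.mkOfCompact
      ⟨_, continuous_finsetSum F fun c hc => (hF c hc).1.smul continuous_const⟩

/-- Let `X` be a complex Banach space, `1 < p < ∞`, and suppose the truncated Hilbert
transforms are uniformly bounded on `L^p(ℝ, X)` by a constant `N`.  Let `G` be a compact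
Hausdorff abelian group with normalized Haar measure `μ` and `φ : ℝ → G` a continuous
homomorphism.  Then for every `n ∈ ℕ` and every `X`-valued trigonometric polynomial
`f = ∑_{χ∈F} a_χ χ` on `G`, the transferred truncated operator satisfies
`‖x ↦ (1/π) ∫_{1/n ≤ |t| ≤ n} f(x − φ(t))/t dt‖_{L^p(G,X)} ≤ N ‖f‖_{L^p(G,X)}`. -/
theorem transference_truncated_hilbert
    {X : Type*} [NormedAddCommGroup X] [NormedSpace ℂ X] [CompleteSpace X]
    (p : ℝ≥0∞) (hp1 : 1 < p) (hp_top : p ≠ ⊤) (N : ℝ)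
    (hHT : ∀ (n : ℕ) (g : ℝ → X), MemLp g p (volume : Measure ℝ) →
      eLpNorm (truncHilbert n g) p (volume : Measure ℝ) ≤
        ENNReal.ofReal N * eLpNorm g p (volume : Measure ℝ))
    {G : Type*} [AddCommGroup G] [TopologicalSpace G] [IsTopologicalAddGroup G]
    [CompactSpace G] [T2Space G] [MeasurableSpace G] [BorelSpace G]
    (μ : Measure G) [μ.IsAddHaarMeasure] [IsProbabilityMeasure μ]
    (φ : ℝ →+ G) (hφ_cont : Continuous φ)
    (F : Finset (G → ℂ))
    (hF : ∀ c ∈ F, Continuous c ∧ (∀ x, ‖c x‖ = 1) ∧ ∀ x y, c (x + y) = c x * c y)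
    (a : (G → ℂ) → X) (n : ℕ) :
    eLpNorm
      (fun x : G => ∫ t in truncSet n, (1 / (Real.pi * t)) • (∑ c ∈ F, c (x - φ t) • a c))
      p μ ≤
    ENNReal.ofReal N * eLpNorm (fun x : G => ∑ c ∈ F, c x • a c) p μ :=
  transference_truncated_hilbert_general p hp_top N hHT μ φ hφ_cont F hF a n
end
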